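/- arXiv:2003.05542 — 8 statements merged into one kernel-verified Lean document; each statement's English description precedes it below -/
import Mathlib

section
/- Let k be a positive integer, let t0 < t1 be real numbers, and for each i ∈ {1,…,k} let f_i : [t0,t1] → ℝ be a differentiable function. Define F : [t0,t1] → ℝ by F(t) = max_{i∈{1,…,k}} f_i(t). Suppose there is r ∈ ℝ such that for every i and every t ∈ [t0,t1], if f_i(t) = F(t) then f_i′(t) ≤ r. Then for all t ∈ [t0,t1], F(t) ≤ F(t0) + r·(t − t0). -/
open Set Filter Topology

/-- maximum of differentiable functions grows at most at rate `r`.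
If each `f i` is differentiable on `[t0, t1]`, `F` is their pointwise maximum, and
whenever `f i t = F t` the derivative of `f i` at `t` is at most `r`, then
`F t ≤ F t0 + r * (t - t0)` on `[t0, t1]`. -/
theorem stmt_0 (k : ℕ) (hk : 0 < k) (t0 t1 : ℝ) (ht : t0 < t1)
    (f : Fin k → ℝ → ℝ)
    (hdiff : ∀ i, ∀ t ∈ Set.Icc t0 t1, DifferentiableAt ℝ (f i) t)
    (r : ℝ) (F : ℝ → ℝ)
    (hF : ∀ t, F t = Finset.univ.sup' (Finset.univ_nonempty_iff.mpr ⟨⟨0, hk⟩⟩)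
      (fun i => f i t))
    (hslope : ∀ i, ∀ t ∈ Set.Icc t0 t1, f i t = F t → deriv (f i) t ≤ r) :
    ∀ t ∈ Set.Icc t0 t1, F t ≤ F t0 + r * (t - t0) := by
  have hne : (Finset.univ : Finset (Fin k)).Nonempty := Finset.univ_nonempty_iff.mpr ⟨⟨0, hk⟩⟩
  have hcont : ∀ i, ContinuousOn (f i) (Set.Icc t0 t1) := fun i x hx =>
    (hdiff i x hx).continuousAt.continuousWithinAt
  have hFeq : F = fun t => Finset.univ.sup' hne (fun i => f i t) := funext hF
  have hFcont : ContinuousOn F (Set.Icc t0 t1) := by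
    rw [hFeq]
    intro x hx
    exact Filter.Tendsto.finset_sup'_nhds_apply hne (fun i _ => hcont i x hx)
  have key : ∀ ⦃x⦄, x ∈ Set.Icc t0 t1 → F x ≤ (fun t => F t0 + r * (t - t0)) x := by
    apply image_le_of_liminf_slope_right_le_deriv_boundary (B' := fun _ => r) hFcont
    · simp
    · fun_prop
    · intro x _
      simpa using (((hasDerivWithinAt_id x (Ici x)).sub_const t0).const_mul r).const_add (F t0)
    · intro x hx r' hr'
      have hxI : x ∈ Set.Icc t0 t1 := ⟨hx.1, hx.2.le⟩
      have hall : ∀ j : Fin k, ∀ᶠ z in 𝓝[>] x, f j z - F x < r' * (z - x) := by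
        intro j
        have hle : f j x ≤ F x := by
          rw [hF x]; exact Finset.le_sup' (fun i => f i x) (Finset.mem_univ j)
        rcases eq_or_lt_of_le hle with heq | hlt
        · -- maximizer: use derivative bound
          have hd := (hdiff j x hxI).hasDerivAt
          have hts : Tendsto (slope (f j) x) (𝓝[>] x) (𝓝 (deriv (f j) x)) :=
            (hasDerivAt_iff_tendsto_slope.1 hd).mono_left
              (nhdsWithin_mono x fun z hz => ne_of_gt hz)
          have hlt' : deriv (f j) x < r' := lt_of_le_of_lt (hslope j x hxI heq) hr'
          filter_upwards [hts.eventually_lt_const hlt', self_mem_nhdsWithin] with z hz hzx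
          have hzx' : 0 < z - x := sub_pos.2 hzx
          rw [slope_def_field] at hz
          have h2 := (div_lt_iff₀ hzx').1 hz
          calc f j z - F x = f j z - f j x := by rw [heq]
            _ < r' * (z - x) := h2
        · -- non-maximizer
          have hc : Tendsto (fun z => f j z - F x - r' * (z - x)) (𝓝[>] x)
              (𝓝 (f j x - F x - r' * (x - x))) := by
            have hc1 : ContinuousAt (fun z => f j z - F x - r' * (z - x)) x := by
              have := (hdiff j x hxI).continuousAt
              fun_prop
            exact hc1.tendsto.mono_left nhdsWithin_le_nhds
          have : f j x - F x - r' * (x - x) < 0 := by simpa using hlt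
          filter_upwards [hc.eventually_lt_const this] with z hz
          linarith
      have := (Filter.eventually_all.2 hall)
      have hev : ∀ᶠ z in 𝓝[>] x, slope F x z < r' := by
        filter_upwards [this, self_mem_nhdsWithin] with z hz hzx
        have hzx' : (0:ℝ) < z - x := sub_pos.2 hzx
        have hFz : F z - F x < r' * (z - x) := by
          rw [hF z]
          have : Finset.univ.sup' hne (fun i => f i z) < F x + r' * (z - x) := by
            rw [Finset.sup'_lt_iff]
            intro j _
            have := hz j
            linarith
          linarith
        rw [slope_def_field]
        exact (div_lt_iff₀ hzx').2 hFz
      exact hev.frequently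
  intro t htI
  exact key htI
end

section
/- Suppose κ > 2δ and v satisfies the slow condition at time t. Then the fast trigger FT does not hold at v at time t; that is, there is no s ∈ ℕ such that both max_{w∈N(v)} Ô_w ≥ (2s+1)κ − δ and min_{w∈N(v)} Ô_w ≥ −(2s+1)κ − δ. -/
/-- if `κ > 2δ` and node `v` satisfies the slow condition at time `t`,
then the fast trigger FT does not hold at `v`. -/
theorem stmt_2 {V : Type*} [Fintype V] (G : SimpleGraph V) [DecidableRel G.Adj]
    (v : V) (hne : (G.neighborFinset v).Nonempty)
    (κ δ : ℝ) (hκ : 0 < κ) (hδ : 0 ≤ δ) (hκδ : 2 * δ < κ)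
    (L : V → ℝ) (O : V → ℝ)
    (hO : ∀ w ∈ G.neighborFinset v, |O w - (L w - L v)| ≤ δ)
    (hslow : ∃ s : ℕ, (∃ x ∈ G.neighborFinset v, 2 * (s : ℝ) * κ ≤ L v - L x) ∧
      ∀ y ∈ G.neighborFinset v, L y - L v ≤ 2 * (s : ℝ) * κ) :
    ¬ ∃ s : ℕ, (2 * (s : ℝ) + 1) * κ - δ ≤ (G.neighborFinset v).sup' hne O ∧
      -((2 * (s : ℝ) + 1) * κ) - δ ≤ (G.neighborFinset v).inf' hne O := by
  rintro ⟨s, hmax, hmin⟩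
  obtain ⟨s0, ⟨x, hx, hxs⟩, hall⟩ := hslow
  obtain ⟨w, hw, hwe⟩ := Finset.exists_mem_eq_sup' hne O
  have hOw := hO w hw
  have hOx := hO x hx
  rw [abs_le] at hOw hOx
  have h1 : (2 * (s : ℝ) + 1) * κ - δ ≤ O w := hwe ▸ hmax
  have h2 : L w - L v ≤ 2 * (s0 : ℝ) * κ := hall w hw
  have hs0 : (s : ℝ) < s0 := by
    by_contra h
    push_neg at h
    have : 2 * (s0 : ℝ) * κ ≤ 2 * (s : ℝ) * κ := by nlinarith
    linarith
  have hs0' : (s : ℝ) + 1 ≤ s0 := by exact_mod_cast Nat.cast_lt.mp hs0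
  have h3 : -((2 * (s : ℝ) + 1) * κ) - δ ≤ O x :=
    le_trans hmin (Finset.inf'_le _ hx)
  nlinarith
end

section
/- (Leading Lemma, combinatorial form) Suppose w ∈ V is a leading node at time t, i.e., there exist v ∈ V and s ∈ ℕ with Ψ_v^s(t) = L_w(t) − L_v(t) − 2sκ·d(v,w) > 0. Then w satisfies the slow condition at time t; in fact, with the same s, some neighbor x of w has L_w(t) − L_x(t) ≥ 2sκ and every neighbor y of w has L_y(t) − L_w(t) ≤ 2sκ. -/
open Finset

variable {V : Type*}

/-- Node `v` satisfies the *fast condition* at time `t`. -/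
def fastCond (G : SimpleGraph V) (L : V → ℝ → ℝ) (κ : ℝ) (v : V) (t : ℝ) : Prop :=
  ∃ s : ℕ, (∃ x, G.Adj v x ∧ (2 * (s : ℝ) + 1) * κ ≤ L x t - L v t) ∧
    ∀ y, G.Adj v y → L v t - L y t ≤ (2 * (s : ℝ) + 1) * κ

/-- Node `v` satisfies the *slow condition* at time `t`. -/
def slowCond (G : SimpleGraph V) (L : V → ℝ → ℝ) (κ : ℝ) (v : V) (t : ℝ) : Prop :=
  ∃ s : ℕ, (∃ x, G.Adj v x ∧ 2 * (s : ℝ) * κ ≤ L v t - L x t) ∧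
    ∀ y, G.Adj v y → L y t - L v t ≤ 2 * (s : ℝ) * κ

/-- `Ψ_v^s(t) = max_{w ∈ V} (L_w(t) - L_v(t) - 2sκ·d(v,w))`. -/
noncomputable def Psi [Fintype V] [Nonempty V] (G : SimpleGraph V) (L : V → ℝ → ℝ)
    (κ : ℝ) (s : ℕ) (v : V) (t : ℝ) : ℝ :=
  univ.sup' univ_nonempty fun w => L w t - L v t - 2 * (s : ℝ) * κ * (G.dist v w)

/-- `Ψ^s(t) = max_{v ∈ V} Ψ_v^s(t)`. -/
noncomputable def PsiMax [Fintype V] [Nonempty V] (G : SimpleGraph V) (L : V → ℝ → ℝ)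
    (κ : ℝ) (s : ℕ) (t : ℝ) : ℝ :=
  univ.sup' univ_nonempty fun v => Psi G L κ s v t

/-- `Ξ_v^s(t) = max_{w ∈ V} (L_v(t) - L_w(t) - (2s+1)κ·d(v,w))`. -/
noncomputable def Xi [Fintype V] [Nonempty V] (G : SimpleGraph V) (L : V → ℝ → ℝ)
    (κ : ℝ) (s : ℕ) (v : V) (t : ℝ) : ℝ :=
  univ.sup' univ_nonempty fun w => L v t - L w t - (2 * (s : ℝ) + 1) * κ * (G.dist v w)

/-- The global skew `𝒢(t) = max_{v,w ∈ V} |L_v(t) - L_w(t)|`. -/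
noncomputable def GSkew [Fintype V] [Nonempty V] (L : V → ℝ → ℝ) (t : ℝ) : ℝ :=
  univ.sup' univ_nonempty fun p : V × V => |L p.1 t - L p.2 t|

private theorem keylemma [Fintype V] [Nonempty V] (G : SimpleGraph V) (hconn : G.Connected)
    (L : V → ℝ → ℝ) (κ : ℝ) (hκ : 0 < κ) (t : ℝ) (w v : V) (s : ℕ)
    (hlead : (univ.sup' univ_nonempty fun w => L w t - L v t - 2 * (s : ℝ) * κ * (G.dist v w)) = L w t - L v t - 2 * (s : ℝ) * κ * (G.dist v w))
    (hpos : 0 < L w t - L v t - 2 * (s : ℝ) * κ * (G.dist v w)) :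
    (∃ x, G.Adj w x ∧ 2 * (s : ℝ) * κ ≤ L w t - L x t) ∧
      (∀ y, G.Adj w y → L y t - L w t ≤ 2 * (s : ℝ) * κ) := by
  have hsκ : (0:ℝ) ≤ 2 * (s:ℝ) * κ := by positivity
  have hne : w ≠ v := by
    rintro rfl
    rw [SimpleGraph.dist_self] at hpos
    norm_num at hpos
  have hmax : ∀ u : V, L u t - L v t - 2 * (s : ℝ) * κ * (G.dist v u)
      ≤ L w t - L v t - 2 * (s : ℝ) * κ * (G.dist v w) := by
    intro u
    rw [← hlead]
    exact Finset.le_sup' (fun u => L u t - L v t - 2 * (s : ℝ) * κ * (G.dist v u))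
      (mem_univ u)
  constructor
  · have hd0 : G.dist v w ≠ 0 := by
      rw [SimpleGraph.dist_ne_zero_iff_ne_and_reachable]
      exact ⟨hne.symm, hconn v w⟩
    obtain ⟨p, hp⟩ := (hconn v w).exists_walk_length_eq_dist
    have hpl : ¬ p.reverse.Nil := by
      rw [SimpleGraph.Walk.not_nil_iff_lt_length]
      simp only [SimpleGraph.Walk.length_reverse, hp]
      omega
    obtain ⟨x, h, q, hq⟩ := SimpleGraph.Walk.not_nil_iff.mp hpl
    refine ⟨x, h, ?_⟩
    have hdx : G.dist v x + 1 ≤ G.dist v w := by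
      have hql : q.length + 1 = p.length := by
        have := congrArg SimpleGraph.Walk.length hq
        simp at this
        omega
      have h2 := G.dist_le q.reverse
      rw [SimpleGraph.Walk.length_reverse] at h2
      have h3 : G.dist v x = G.dist x v := SimpleGraph.dist_comm
      omega
    have hdxr : (G.dist v x : ℝ) + 1 ≤ (G.dist v w : ℝ) := by exact_mod_cast hdx
    nlinarith [hmax x]
  · intro y hy
    have hd : (G.dist v y : ℝ) ≤ (G.dist v w : ℝ) + 1 := by
      have htri := hconn.dist_triangle (u := v) (v := w) (w := y)
      have h1 : G.dist w y = 1 := SimpleGraph.dist_eq_one_iff_adj.mpr hy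
      rw [h1] at htri
      exact_mod_cast htri
    nlinarith [hmax y]

/-- Leading Lemma, combinatorial form: a leading node satisfies the
slow condition, in fact with the same `s`. -/
theorem stmt_3 [Fintype V] [Nonempty V] (G : SimpleGraph V) (hconn : G.Connected)
    (L : V → ℝ → ℝ) (κ : ℝ) (hκ : 0 < κ) (t : ℝ) (w v : V) (s : ℕ)
    (hlead : Psi G L κ s v t = L w t - L v t - 2 * (s : ℝ) * κ * (G.dist v w))
    (hpos : 0 < L w t - L v t - 2 * (s : ℝ) * κ * (G.dist v w)) :
    slowCond G L κ w t ∧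
      (∃ x, G.Adj w x ∧ 2 * (s : ℝ) * κ ≤ L w t - L x t) ∧
      (∀ y, G.Adj w y → L y t - L w t ≤ 2 * (s : ℝ) * κ) := by
  have h := keylemma G hconn L κ hκ t w v s (by rw [← hlead]; rfl) hpos
  exact ⟨⟨s, h.1, h.2⟩, h.1, h.2⟩
end

section
/- (Trailing Lemma, combinatorial form) Suppose w ∈ V is a trailing node at time t, i.e., there exist v ∈ V and s ∈ ℕ with Ξ_v^s(t) = L_v(t) − L_w(t) − (2s+1)κ·d(v,w) > 0. Then w satisfies the fast condition at time t; in fact, with the same s, some neighbor x of w has L_x(t) − L_w(t) ≥ (2s+1)κ and every neighbor y of w has L_w(t) − L_y(t) ≤ (2s+1)κ. -/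
open Finset

variable {V : Type*}

/-! A trailing node `w` minimises `u ↦ L_u(t) + (2s+1)κ·d(v,u)`, and `w ≠ v`. Comparing with
the neighbour of `w` on a shortest path to `v` (one step closer) gives a neighbour at least
`(2s+1)κ` ahead; comparing with an arbitrary neighbour `y` (at most one step farther) bounds
`L_w(t) - L_y(t)`. -/

namespace SimpleGraph

variable {G : SimpleGraph V} {v w : V}

theorem exists_adj_dist_add_one_eq (h : G.dist v w ≠ 0) :
    ∃ x, G.Adj w x ∧ G.dist v x + 1 = G.dist v w := by
  obtain ⟨p, hp⟩ := exists_walk_of_dist_ne_zero h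
  cases hrev : p.reverse with
  | nil =>
    have : p.length = 0 := by rw [← Walk.length_reverse, hrev, Walk.length_nil]
    omega
  | cons hadj q =>
    refine ⟨_, hadj, le_antisymm ?_ ?_⟩
    · have hlen : q.length + 1 = G.dist v w := by
        rw [← hp, ← Walk.length_reverse p, hrev, Walk.length_cons]
      have := dist_le q.reverse
      rw [Walk.length_reverse] at this
      omega
    · calc G.dist v w ≤ G.dist v _ + G.dist _ w := hadj.symm.reachable.dist_triangle_right v
        _ = G.dist v _ + 1 := by rw [dist_eq_one_iff_adj.mpr hadj.symm]

variable {f : V → ℝ} {c : ℝ}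

theorem sub_le_of_adj_of_forall_le (hc : 0 ≤ c)
    (hmin : ∀ u, f w + c * G.dist v w ≤ f u + c * G.dist v u) {y : V} (hy : G.Adj w y) :
    f w - f y ≤ c := by
  have htri : G.dist v y ≤ G.dist v w + 1 :=
    dist_eq_one_iff_adj.mpr hy ▸ hy.reachable.dist_triangle_right v
  have : c * G.dist v y ≤ c * (G.dist v w + 1) := by gcongr; exact_mod_cast htri
  linarith [hmin y]

theorem exists_adj_le_sub_of_forall_le (hvw : G.dist v w ≠ 0)
    (hmin : ∀ u, f w + c * G.dist v w ≤ f u + c * G.dist v u) :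
    ∃ x, G.Adj w x ∧ c ≤ f x - f w := by
  obtain ⟨x, hadj, hx⟩ := exists_adj_dist_add_one_eq hvw
  refine ⟨x, hadj, ?_⟩
  have := hmin x
  rw [← hx, Nat.cast_succ] at this
  linarith

end SimpleGraph

/-- Trailing Lemma, combinatorial form: a trailing node satisfies the
fast condition, in fact with the same `s`. -/
theorem stmt_4 [Fintype V] [Nonempty V] (G : SimpleGraph V) (hconn : G.Connected)
    (L : V → ℝ → ℝ) (κ : ℝ) (hκ : 0 < κ) (t : ℝ) (w v : V) (s : ℕ)
    (htrail : Xi G L κ s v t = L v t - L w t - (2 * (s : ℝ) + 1) * κ * (G.dist v w))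
    (hpos : 0 < L v t - L w t - (2 * (s : ℝ) + 1) * κ * (G.dist v w)) :
    fastCond G L κ w t ∧
      (∃ x, G.Adj w x ∧ (2 * (s : ℝ) + 1) * κ ≤ L x t - L w t) ∧
      (∀ y, G.Adj w y → L w t - L y t ≤ (2 * (s : ℝ) + 1) * κ) := by
  have hmin : ∀ u,
      L w t + (2 * s + 1) * κ * G.dist v w ≤ L u t + (2 * s + 1) * κ * G.dist v u := by
    intro u
    have : _ ≤ Xi G L κ s v t :=
      univ.le_sup' (fun u => L v t - L u t - (2 * (s : ℝ) + 1) * κ * G.dist v u) (mem_univ u)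
    linarith
  have hvw : G.dist v w ≠ 0 := by
    rintro hd
    obtain rfl := hconn.dist_eq_zero_iff.mp hd
    simp at hpos
  have hfast := SimpleGraph.exists_adj_le_sub_of_forall_le (f := (L · t)) hvw hmin
  have hslow (y : V) (hy : G.Adj w y) :=
    SimpleGraph.sub_le_of_adj_of_forall_le (f := (L · t)) (by positivity) hmin hy
  exact ⟨⟨s, hfast, hslow⟩, hfast, hslow⟩
end

section
/- (Wait-up Lemma) Let s ∈ ℕ, w ∈ V, and 0 ≤ t0 < t1. Suppose Ψ_w^s(t) > 0 for all t ∈ (t0, t1]. Then Ψ_w^s(t1) ≤ Ψ_w^s(t0) − (L_w(t1) − L_w(t0)) + (1+ρ)(t1 − t0). -/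
open Finset

variable {V : Type*}

section MaxGrowth
open Filter Topology

lemma max_growth {ι : Type*} [Fintype ι] [Nonempty ι] (f : ι → ℝ → ℝ)
    (hdiff : ∀ i, Differentiable ℝ (f i)) (c a b : ℝ) (hab : a ≤ b)
    (hd : ∀ x ∈ Set.Icc a b, ∀ i, (∀ j, f j x ≤ f i x) → deriv (f i) x ≤ c) :
    (univ.sup' univ_nonempty fun i => f i b) ≤
      (univ.sup' univ_nonempty fun i => f i a) + c * (b - a) := by
  set F : ℝ → ℝ := fun x => univ.sup' univ_nonempty fun i => f i x with hF
  have hFc : Continuous F := continuous_iff_continuousAt.2 fun x =>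
    ContinuousAt.finset_sup'_apply _ fun i _ => ((hdiff i).continuous).continuousAt
  have key : ∀ x ∈ Set.Icc a b, F x ≤ F a + c * (x - a) := by
    apply image_le_of_liminf_slope_right_le_deriv_boundary (B' := fun _ => c)
      hFc.continuousOn (by simp)
      (by fun_prop)
    · intro x _
      simpa using (((hasDerivWithinAt_id x (Set.Ici x)).sub_const a).const_mul c).const_add (F a)
    · intro x hx r hr
      have hcov : ∀ z : ℝ, ∃ i : ι, f i z = F z := fun z => by
        obtain ⟨i, _, hi⟩ := Finset.exists_mem_eq_sup' univ_nonempty (fun i => f i z)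
        exact ⟨i, hi.symm⟩
      have hfreq : ∃ i : ι, ∃ᶠ z in 𝓝[>] x, f i z = F z := by
        by_contra h
        push_neg at h
        have hall : ∀ᶠ z in 𝓝[>] x, ∀ i : ι, ¬ f i z = F z :=
          Filter.eventually_all.2 h
        obtain ⟨z, hz⟩ := hall.exists
        obtain ⟨i, hi⟩ := hcov z
        exact hz i hi
      obtain ⟨i, hi⟩ := hfreq
      have hclosed : IsClosed {z : ℝ | f i z = F z} :=
        isClosed_eq (hdiff i).continuous hFc
      have hx_mem : f i x = F x := by
        have : x ∈ closure {z : ℝ | f i z = F z} :=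
          mem_closure_iff_frequently.2 (hi.filter_mono nhdsWithin_le_nhds)
        rwa [hclosed.closure_eq] at this
      have hmax : ∀ j, f j x ≤ f i x := fun j => by
        rw [hx_mem]; exact Finset.le_sup' (fun i => f i x) (mem_univ j)
      have hderiv : deriv (f i) x ≤ c := hd x ⟨hx.1, hx.2.le⟩ i hmax
      have htends : Tendsto (slope (f i) x) (𝓝[≠] x) (𝓝 (deriv (f i) x)) :=
        hasDerivAt_iff_tendsto_slope.1 ((hdiff i) x).hasDerivAt
      have hev : ∀ᶠ z in 𝓝[>] x, slope (f i) x z < r := by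
        have h1 : ∀ᶠ z in 𝓝[≠] x, slope (f i) x z < r :=
          htends.eventually_lt_const (lt_of_le_of_lt hderiv hr)
        exact h1.filter_mono (nhdsWithin_mono x fun z hz => ne_of_gt hz)
      refine (hi.and_eventually hev).mono ?_
      rintro z ⟨hz1, hz2⟩
      rwa [slope_def_field, ← hz1, ← hx_mem, ← slope_def_field]
  exact key b ⟨hab, le_rfl⟩

end MaxGrowth

/-- Wait-up Lemma. -/
theorem stmt_5 [Fintype V] [Nonempty V] (G : SimpleGraph V) (hconn : G.Connected)
    (L : V → ℝ → ℝ) (κ ρ μ : ℝ) (hκ : 0 < κ) (hρ : 0 < ρ) (hρμ : ρ < μ)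
    (hdiff : ∀ v, Differentiable ℝ (L v))
    (hrate : ∀ v u, 0 ≤ u → 1 ≤ deriv (L v) u ∧ deriv (L v) u ≤ (1 + μ) * (1 + ρ))
    (hfastI : ∀ v u, 0 ≤ u → fastCond G L κ v u → 1 + μ ≤ deriv (L v) u)
    (hslowI : ∀ v u, 0 ≤ u → slowCond G L κ v u → deriv (L v) u ≤ 1 + ρ)
    (s : ℕ) (w : V) (t0 t1 : ℝ) (ht0 : 0 ≤ t0) (ht01 : t0 < t1)
    (hpos : ∀ t ∈ Set.Ioc t0 t1, 0 < Psi G L κ s w t) :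
    Psi G L κ s w t1 ≤ Psi G L κ s w t0 - (L w t1 - L w t0) + (1 + ρ) * (t1 - t0) := by
  classical
  set f : V → ℝ → ℝ := fun v t => L v t - 2 * (s : ℝ) * κ * (G.dist w v) with hf
  have hfd : ∀ v, Differentiable ℝ (f v) := fun v => (hdiff v).sub_const _
  set F : ℝ → ℝ := fun t => univ.sup' univ_nonempty fun v => f v t with hF
  have hPsiF : ∀ t, Psi G L κ s w t = F t - L w t := by
    intro t
    have h1 : Psi G L κ s w t = univ.sup' univ_nonempty fun v => f v t - L w t := by
      unfold Psi
      exact Finset.sup'_congr _ rfl fun v _ => by simp [hf]; ring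
    have h2 : (fun x : ℝ => x - L w t) (univ.sup' univ_nonempty fun v => f v t)
        = univ.sup' univ_nonempty ((fun x : ℝ => x - L w t) ∘ fun v => f v t) :=
      Finset.comp_sup'_eq_sup'_comp univ_nonempty (fun x : ℝ => x - L w t)
        fun x y => (max_sub_sub_right x y (L w t)).symm
    rw [h1]
    exact h2.symm
  have h2s : (0:ℝ) ≤ 2 * (s : ℝ) * κ := by positivity
  have hstep : ∀ a ∈ Set.Ioc t0 t1, F t1 ≤ F a + (1 + ρ) * (t1 - a) := by
    intro a ha
    apply max_growth f hfd (1 + ρ) a t1 ha.2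
    intro x hx v hv
    have hxI : x ∈ Set.Ioc t0 t1 := ⟨lt_of_lt_of_le ha.1 hx.1, hx.2⟩
    have hx0 : 0 ≤ x := le_trans ht0 hxI.1.le
    have hde : deriv (f v) x = deriv (L v) x := by
      simp only [hf]
      exact deriv_sub_const _
    rw [hde]
    apply hslowI v x hx0
    have hP := hpos x hxI
    rw [hPsiF x] at hP
    have hFle : F x ≤ f v x := Finset.sup'_le _ _ fun j _ => hv j
    have hvw : v ≠ w := by
      intro h; subst h
      simp only [hf, SimpleGraph.dist_self] at hFle
      simp only [Nat.cast_zero, mul_zero, sub_zero] at hFle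
      linarith
    refine ⟨s, ?_, ?_⟩
    · -- neighbor towards w
      have hdvw : G.dist v w ≠ 0 := by
        rw [SimpleGraph.dist_ne_zero_iff_ne_and_reachable]
        exact ⟨hvw, hconn.preconnected v w⟩
      obtain ⟨p, hp⟩ := SimpleGraph.exists_walk_of_dist_ne_zero hdvw
      have hnil : ¬ p.Nil := by
        rw [SimpleGraph.Walk.nil_iff_length_eq]
        omega
      refine ⟨p.getVert 1, p.adj_snd hnil, ?_⟩
      have hdle : G.dist (p.getVert 1) w ≤ p.tail.length := SimpleGraph.dist_le p.tail
      have hlen : p.tail.length + 1 = p.length := SimpleGraph.Walk.length_tail_add_one hnil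
      have hdist : G.dist w (p.getVert 1) + 1 ≤ G.dist w v := by
        have hc1 : G.dist w v = G.dist v w := SimpleGraph.dist_comm
        have hc2 : G.dist w (p.getVert 1) = G.dist (p.getVert 1) w := SimpleGraph.dist_comm
        omega
      have hcast : (G.dist w (p.getVert 1) : ℝ) + 1 ≤ (G.dist w v : ℝ) := by
        exact_mod_cast hdist
      have hmax := hv (p.getVert 1)
      simp only [hf] at hmax
      nlinarith [mul_le_mul_of_nonneg_left hcast h2s]
    · intro y hy
      have hdy : G.dist w y ≤ G.dist w v + 1 := by
        have h1 : G.dist w y ≤ G.dist w v + G.dist v y := hconn.dist_triangle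
        have h2 : G.dist v y = 1 := SimpleGraph.dist_eq_one_iff_adj.2 hy
        omega
      have hcast : (G.dist w y : ℝ) ≤ (G.dist w v : ℝ) + 1 := by exact_mod_cast hdy
      have hmax := hv y
      simp only [hf] at hmax
      nlinarith [mul_le_mul_of_nonneg_left hcast h2s]
  have hFc : Continuous F := continuous_iff_continuousAt.2 fun x =>
    ContinuousAt.finset_sup'_apply _ fun i _ => ((hfd i).continuous).continuousAt
  have hF1 : F t1 ≤ F t0 + (1 + ρ) * (t1 - t0) := by
    apply le_of_forall_pos_le_add
    intro ε hε
    have hcont : ContinuousAt F t0 := hFc.continuousAt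
    rw [Metric.continuousAt_iff] at hcont
    obtain ⟨δ, hδ, hδ'⟩ := hcont ε hε
    set a := t0 + min (δ / 2) ((t1 - t0) / 2) with haa
    have hmin : 0 < min (δ / 2) ((t1 - t0) / 2) := lt_min (by linarith) (by linarith)
    have ha1 : t0 < a := by rw [haa]; linarith
    have ha2 : a ≤ t1 := by
      have : min (δ / 2) ((t1 - t0) / 2) ≤ (t1 - t0) / 2 := min_le_right _ _
      rw [haa]; linarith
    have hdista : dist a t0 < δ := by
      have : min (δ / 2) ((t1 - t0) / 2) ≤ δ / 2 := min_le_left _ _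
      rw [Real.dist_eq, haa]
      rw [abs_of_pos (by linarith)]
      linarith
    have hFa : F a < F t0 + ε := by
      have := hδ' hdista
      rw [Real.dist_eq] at this
      have := abs_lt.1 this
      linarith [this.2]
    have := hstep a ⟨ha1, ha2⟩
    have hmono : (1 + ρ) * (t1 - a) ≤ (1 + ρ) * (t1 - t0) :=
      mul_le_mul_of_nonneg_left (by linarith) (by linarith)
    linarith
  rw [hPsiF t1, hPsiF t0]
  linarith
end

section
/- For all s ∈ ℕ and all times 0 ≤ t0 ≤ t1, Ψ^s(t1) ≤ Ψ^s(t0) + ρ·(t1 − t0). -/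
open Finset

variable {V : Type*}

/-- A finite supremum of differentiable functions whose derivative at every argmax
point is at most `ρ > 0` grows at rate at most `ρ`. -/
lemma sup'_rate_bound {ι : Type*} [Fintype ι] [Nonempty ι] (g : ι → ℝ → ℝ)
    (hdiff : ∀ i, Differentiable ℝ (g i)) {ρ : ℝ} (hρ : 0 < ρ)
    (a b : ℝ) (hab : a ≤ b)
    (hbound : ∀ x ∈ Set.Ico a b, ∀ i : ι, (∀ j, g j x ≤ g i x) → deriv (g i) x ≤ ρ) :
    (univ.sup' univ_nonempty fun i => g i b) ≤
      (univ.sup' univ_nonempty fun i => g i a) + ρ * (b - a) := by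
  classical
  set f : ℝ → ℝ := fun t => univ.sup' univ_nonempty fun i => g i t with hfdef
  have hfcont : Continuous f :=
    Continuous.finset_sup'_apply univ_nonempty fun i _ => (hdiff i).continuous
  have key :
      ∀ ⦃x⦄, x ∈ Set.Icc a b → f x ≤ f a + ρ * (x - a) := by
    apply image_le_of_liminf_slope_right_le_deriv_boundary (B' := fun _ => ρ)
      hfcont.continuousOn
    · simp
    · exact (continuous_const.add (continuous_const.mul
        (continuous_id.sub continuous_const))).continuousOn
    · intro x _
      have h1 : HasDerivWithinAt (fun t : ℝ => ρ * (t - a)) (ρ * 1) (Set.Ici x) x :=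
        ((hasDerivWithinAt_id x (Set.Ici x)).sub_const a).const_mul ρ
      simpa using h1.const_add (f a)
    · intro x hx r hr
      apply Filter.Eventually.frequently
      have h1 : ∀ i : ι, ∀ᶠ z in nhdsWithin x (Set.Ioi x), g i z < f x + r * (z - x) := by
        intro i
        by_cases hi : g i x = f x
        · have hdg : HasDerivAt (g i) (deriv (g i) x) x := ((hdiff i) x).hasDerivAt
          have hdlt : deriv (g i) x < r := by
            refine lt_of_le_of_lt (hbound x hx i ?_) hr
            intro j
            rw [hi]
            exact Finset.le_sup' (fun k => g k x) (mem_univ j)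
          have hslope := hasDerivAt_iff_tendsto_slope.mp hdg
          have h2 : ∀ᶠ z in nhdsWithin x {x}ᶜ, slope (g i) x z < r :=
            hslope.eventually_lt_const hdlt
          have h3 : ∀ᶠ z in nhdsWithin x (Set.Ioi x), slope (g i) x z < r :=
            (nhdsWithin_mono x fun z (hz : x < z) => hz.ne') h2
          filter_upwards [h3, self_mem_nhdsWithin] with z hz1 hz2
          have hzx : (0:ℝ) < z - x := sub_pos.mpr hz2
          rw [slope_def_field, div_lt_iff₀ hzx] at hz1
          rw [← hi]
          linarith
        · have hlt : g i x < f x :=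
            lt_of_le_of_ne (Finset.le_sup' (fun k => g k x) (mem_univ i)) hi
          have h2 : ∀ᶠ z in nhds x, g i z < f x :=
            ((hdiff i).continuous.continuousAt).eventually_lt_const hlt
          have h3 : ∀ᶠ z in nhdsWithin x (Set.Ioi x), g i z < f x :=
            nhdsWithin_le_nhds h2
          filter_upwards [h3, self_mem_nhdsWithin] with z hz1 hz2
          have hzx : (0:ℝ) < z - x := sub_pos.mpr hz2
          have hr0 : 0 < r := hρ.trans hr
          nlinarith
      have h2 : ∀ᶠ z in nhdsWithin x (Set.Ioi x), ∀ i : ι, g i z < f x + r * (z - x) :=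
        Filter.eventually_all.mpr h1
      filter_upwards [h2, self_mem_nhdsWithin] with z hz1 hz2
      have hzx : (0:ℝ) < z - x := sub_pos.mpr hz2
      have hfz : f z < f x + r * (z - x) := by
        rw [hfdef]
        exact (Finset.sup'_lt_iff univ_nonempty).mpr fun i _ => hz1 i
      rw [slope_def_field, div_lt_iff₀ hzx]
      linarith
  exact key (Set.right_mem_Icc.mpr hab)

/-- `Ψ^s` grows at most at rate `ρ`. -/
theorem stmt_6 [Fintype V] [Nonempty V] (G : SimpleGraph V) (hconn : G.Connected)
    (L : V → ℝ → ℝ) (κ ρ μ : ℝ) (hκ : 0 < κ) (hρ : 0 < ρ) (hρμ : ρ < μ)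
    (hdiff : ∀ v, Differentiable ℝ (L v))
    (hrate : ∀ v u, 0 ≤ u → 1 ≤ deriv (L v) u ∧ deriv (L v) u ≤ (1 + μ) * (1 + ρ))
    (hfastI : ∀ v u, 0 ≤ u → fastCond G L κ v u → 1 + μ ≤ deriv (L v) u)
    (hslowI : ∀ v u, 0 ≤ u → slowCond G L κ v u → deriv (L v) u ≤ 1 + ρ)
    (s : ℕ) (t0 t1 : ℝ) (ht0 : 0 ≤ t0) (ht01 : t0 ≤ t1) :
    PsiMax G L κ s t1 ≤ PsiMax G L κ s t0 + ρ * (t1 - t0) := by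
  classical
  set g : V × V → ℝ → ℝ :=
    fun p t => L p.2 t - L p.1 t - 2 * (s : ℝ) * κ * (G.dist p.1 p.2) with hg
  have hc0 : (0:ℝ) ≤ 2 * (s : ℝ) * κ := by positivity
  -- PsiMax is the sup over pairs
  have hfeq : ∀ t : ℝ,
      PsiMax G L κ s t = univ.sup' univ_nonempty fun p : V × V => g p t := by
    intro t
    apply le_antisymm
    · apply Finset.sup'_le
      intro v _
      apply Finset.sup'_le
      intro w _
      exact Finset.le_sup' (fun p : V × V => g p t) (mem_univ (v, w))
    · apply Finset.sup'_le
      intro p _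
      calc g p t ≤ Psi G L κ s p.1 t :=
            Finset.le_sup' (fun w => L w t - L p.1 t - 2 * (s:ℝ) * κ * (G.dist p.1 w))
              (mem_univ p.2)
        _ ≤ PsiMax G L κ s t := Finset.le_sup' (fun v => Psi G L κ s v t) (mem_univ p.1)
  -- derivatives of the g's
  have hgderiv : ∀ (p : V × V) (x : ℝ),
      HasDerivAt (g p) (deriv (L p.2) x - deriv (L p.1) x) x := by
    intro p x
    exact ((((hdiff p.2) x).hasDerivAt.sub ((hdiff p.1) x).hasDerivAt)).sub_const _
  have hgdiff : ∀ p : V × V, Differentiable ℝ (g p) :=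
    fun p x => (hgderiv p x).differentiableAt
  rw [hfeq t0, hfeq t1]
  apply sup'_rate_bound g hgdiff hρ t0 t1 ht01
  intro x hx p hmax
  have hx0 : 0 ≤ x := ht0.trans hx.1
  obtain ⟨v, w⟩ := p
  rw [(hgderiv (v, w) x).deriv]
  by_cases hvw : v = w
  · subst hvw; simp [hρ.le]
  -- the maximizing node w satisfies the slow condition
  have hslow : slowCond G L κ w x := by
    refine ⟨s, ?_, ?_⟩
    · -- a neighbor on a shortest path from w to v
      have hdpos : G.dist w v ≠ 0 := by
        have := hconn.pos_dist_of_ne (fun h => hvw h.symm)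
        omega
      obtain ⟨q, hq⟩ := SimpleGraph.exists_walk_of_dist_ne_zero hdpos
      cases q with
      | nil => exact absurd rfl hvw
      | cons hadj q' =>
        rename_i u
        refine ⟨u, hadj, ?_⟩
        have hlen : q'.length + 1 = G.dist w v := by
          simpa [SimpleGraph.Walk.length_cons] using hq
        have hdu : G.dist v u + 1 ≤ G.dist v w := by
          have h1 : G.dist v u ≤ q'.length := by
            rw [SimpleGraph.dist_comm]
            exact SimpleGraph.dist_le q'
          rw [SimpleGraph.dist_comm (u := v) (v := w)]
          omega
        have hduR : (G.dist v u : ℝ) + 1 ≤ (G.dist v w : ℝ) := by exact_mod_cast hdu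
        have h2 := hmax (v, u)
        simp only [hg] at h2
        nlinarith
    · intro y hy
      have hdy : G.dist v y ≤ G.dist v w + 1 := by
        have h1 : G.dist v y ≤ G.dist v w + G.dist w y := hconn.dist_triangle
        have h2 : G.dist w y = 1 := SimpleGraph.dist_eq_one_iff_adj.mpr hy
        omega
      have hdyR : (G.dist v y : ℝ) ≤ (G.dist v w : ℝ) + 1 := by exact_mod_cast hdy
      have h2 := hmax (v, y)
      simp only [hg] at h2
      nlinarith
  have h1 : deriv (L w) x ≤ 1 + ρ := hslowI w x hx0 hslow
  have h2 : 1 ≤ deriv (L v) x := (hrate v x hx0).1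
  simp only
  linarith
end

section
/- Let s ∈ ℕ and let t0 ≤ t1 be times satisfying t1 ≥ t0 + Ψ^s(t0)/μ. Then for every w ∈ V, L_w(t1) − L_w(t0) ≥ (t1 − t0) + Ψ_w^s(t0) − κ·D. -/
/-!
Compare the clocks with the `(2s+1)κ`-Lipschitz envelope of the initial clock values,
`N v = max_w (L_w(t0) - (2s+1)κ·d(v,w))`. The lag `Φ(t) = max_v ((t - t0) + N v - L_v(t))`
starts below `Ψ^s(t0)` and never increases, since clocks run at rate at least `1`. While `Φ` is
positive, a node attaining it lies strictly below the envelope, so along a geodesic to the point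
realising `N v` it has a neighbour at least `(2s+1)κ` ahead, while no neighbour is more than
`(2s+1)κ` behind: the node is fast, and `Φ` falls at rate at least `μ`. Hence `Φ(t1) ≤ 0`, and
`N w - L_w(t0) ≥ Ψ_w^s(t0) - κD` gives the claim.
-/

open Finset

variable {V : Type*}

open Filter Topology

section SupOfFamily

variable {ι : Type*} [Fintype ι] [Nonempty ι] {f : ι → ℝ → ℝ}

theorem eventually_slope_sup'_lt {f' : ι → ℝ} {x r : ℝ} (hf : ∀ i, HasDerivAt (f i) (f' i) x)
    (hr : ∀ i, f i x = univ.sup' univ_nonempty (fun j => f j x) → f' i < r) :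
    ∀ᶠ z in 𝓝[>] x, slope (fun t => univ.sup' univ_nonempty fun i => f i t) x z < r := by
  set Φ := fun t => univ.sup' univ_nonempty fun i => f i t
  have hbelow : ∀ i, ∀ᶠ z in 𝓝[>] x, f i z < Φ x + r * (z - x) := by
    intro i
    rcases (le_sup' (fun j => f j x) (mem_univ i)).eq_or_lt with hmax | hlt
    · have hslope := (hasDerivAt_iff_tendsto_slope.mp (hf i)).mono_left (nhdsGT_le_nhdsNE x)
      filter_upwards [hslope (Iio_mem_nhds (hr i hmax)), self_mem_nhdsWithin] with z hz hxz
      rw [Set.mem_preimage, Set.mem_Iio, slope_def_field, div_lt_iff₀ (sub_pos.2 hxz)] at hz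
      change f i x = Φ x at hmax
      linarith
    · have hlim : Tendsto (fun z => f i z - r * (z - x)) (𝓝 x) (𝓝 (f i x)) := by
        have hcont : ContinuousAt (fun z => f i z - r * (z - x)) x :=
          (hf i).continuousAt.sub (by fun_prop)
        simpa using hcont.tendsto
      filter_upwards [nhdsWithin_le_nhds (hlim (Iio_mem_nhds hlt))] with z hz
      rw [Set.mem_preimage, Set.mem_Iio] at hz
      linarith
  filter_upwards [eventually_all.2 hbelow, self_mem_nhdsWithin] with z hz hxz
  have hΦz : Φ z < Φ x + r * (z - x) := (sup'_lt_iff _).2 fun i _ => hz i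
  rw [slope_def_field, div_lt_iff₀ (sub_pos.2 (Set.mem_Ioi.1 hxz))]
  linarith

theorem sup'_le_sub_mul_of_hasDerivAt {f' : ι → ℝ → ℝ} {a b μ : ℝ} (hab : a ≤ b)
    (hf : ∀ i x, HasDerivAt (f i) (f' i x) x)
    (hμ : ∀ x ∈ Set.Ico a b, ∀ i,
      f i x = univ.sup' univ_nonempty (fun j => f j x) → f' i x ≤ -μ) :
    univ.sup' univ_nonempty (fun i => f i b) ≤
      univ.sup' univ_nonempty (fun i => f i a) - μ * (b - a) := by
  have hΦ : Continuous fun t => univ.sup' univ_nonempty fun i => f i t :=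
    Continuous.finset_sup'_apply univ_nonempty fun i _ =>
      continuous_iff_continuousAt.2 fun x => (hf i x).continuousAt
  refine image_le_of_liminf_slope_right_le_deriv_boundary hΦ.continuousOn
    (B := fun t => univ.sup' univ_nonempty (fun i => f i a) - μ * (t - a)) (B' := fun _ => -μ)
    (by simp) (by fun_prop) (fun x _ => ?_) (fun x hx r hr => ?_) ⟨hab, le_rfl⟩
  · simpa using (((hasDerivAt_id x).sub_const a).const_mul μ).hasDerivWithinAt.const_sub _
  · exact (eventually_slope_sup'_lt (fun i => hf i x) fun i hi =>
      (hμ x hx i hi).trans_lt hr).frequently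

theorem sup'_nonpos_of_hasDerivAt {f' : ι → ℝ → ℝ} {a b μ : ℝ} (hab : a ≤ b)
    (hf : ∀ i x, HasDerivAt (f i) (f' i x) x) (hanti : ∀ i, AntitoneOn (f i) (Set.Ici a))
    (hμ : ∀ x ∈ Set.Ico a b, 0 < univ.sup' univ_nonempty (fun j => f j x) → ∀ i,
      f i x = univ.sup' univ_nonempty (fun j => f j x) → f' i x ≤ -μ)
    (hstart : univ.sup' univ_nonempty (fun i => f i a) ≤ μ * (b - a)) :
    univ.sup' univ_nonempty (fun i => f i b) ≤ 0 := by
  by_contra! hpos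
  have hΦ_anti : ∀ x ∈ Set.Icc a b, univ.sup' univ_nonempty (fun i => f i b) ≤
      univ.sup' univ_nonempty (fun i => f i x) := fun x hx =>
    sup'_le _ _ fun i _ => (hanti i hx.1 hab hx.2).trans (le_sup' (f · x) (mem_univ i))
  have hdrop := sup'_le_sub_mul_of_hasDerivAt hab hf fun x hx =>
    hμ x hx (hpos.trans_le (hΦ_anti x (Set.Ico_subset_Icc_self hx)))
  linarith

end SupOfFamily

theorem sub_le_sub_of_one_le_deriv {g : ℝ → ℝ} (hg : Differentiable ℝ g)
    (h : ∀ u, 0 ≤ u → 1 ≤ deriv g u) {x z : ℝ} (hx : 0 ≤ x) (hxz : x ≤ z) :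
    z - x ≤ g z - g x := by
  simpa using (convex_Ici (0 : ℝ)).mul_sub_le_image_sub_of_le_deriv hg.continuous.continuousOn
    hg.differentiableOn (fun u hu => h u (interior_subset hu)) x hx z (hx.trans hxz) hxz

namespace SimpleGraph

variable [Fintype V] [Nonempty V] (G : SimpleGraph V)

noncomputable def lipschitzEnvelope (c : ℝ) (a : V → ℝ) (v : V) : ℝ :=
  univ.sup' univ_nonempty fun w => a w - c * G.dist v w

variable {G} {c : ℝ} {a : V → ℝ}

theorem sub_mul_dist_le_lipschitzEnvelope (v w : V) :
    a w - c * G.dist v w ≤ G.lipschitzEnvelope c a v :=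
  le_sup' (fun w => a w - c * G.dist v w) (mem_univ w)

theorem exists_lipschitzEnvelope_eq (v : V) :
    ∃ w, G.lipschitzEnvelope c a v = a w - c * G.dist v w := by
  obtain ⟨w, -, hw⟩ := exists_mem_eq_sup' univ_nonempty fun w => a w - c * G.dist v w
  exact ⟨w, hw⟩

theorem lipschitzEnvelope_sub_le_of_adj (hc : 0 ≤ c) {v y : V} (hvy : G.Adj v y) :
    G.lipschitzEnvelope c a v - c ≤ G.lipschitzEnvelope c a y := by
  obtain ⟨w, hw⟩ := exists_lipschitzEnvelope_eq (G := G) (c := c) (a := a) v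
  have hdist : G.dist y w ≤ G.dist v w + 1 := by
    rw [dist_comm (u := y), dist_comm (u := v)]
    rcases hvy.diff_dist_adj (u := w) with h | h | h <;> omega
  replace hdist : (G.dist y w : ℝ) ≤ G.dist v w + 1 := by exact_mod_cast hdist
  have := sub_mul_dist_le_lipschitzEnvelope (G := G) (c := c) (a := a) y w
  nlinarith

theorem Connected.exists_adj_add_le_lipschitzEnvelope (hG : G.Connected) (hc : 0 ≤ c) {v : V}
    (hv : a v < G.lipschitzEnvelope c a v) :
    ∃ b, G.Adj v b ∧ G.lipschitzEnvelope c a v + c ≤ G.lipschitzEnvelope c a b := by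
  obtain ⟨w, hw⟩ := exists_lipschitzEnvelope_eq (G := G) (c := c) (a := a) v
  have hvw : v ≠ w := by
    rintro rfl
    simp [hw] at hv
  obtain ⟨p, hp⟩ := hG.exists_walk_length_eq_dist v w
  cases p with
  | nil => exact absurd rfl hvw
  | @cons _ b _ hvb q =>
    refine ⟨b, hvb, ?_⟩
    have hdist : (G.dist b w : ℝ) + 1 ≤ G.dist v w := by
      rw [Walk.length_cons] at hp
      exact_mod_cast hp ▸ Nat.add_le_add_right (dist_le q) 1
    have := sub_mul_dist_le_lipschitzEnvelope (G := G) (c := c) (a := a) b w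
    nlinarith

end SimpleGraph

section ClockSync

variable [Fintype V] [Nonempty V] {G : SimpleGraph V} {L : V → ℝ → ℝ} {κ : ℝ} {s : ℕ}

open SimpleGraph

theorem fastCond_of_forall_sub_le (hG : G.Connected) (hκ : 0 ≤ κ) {a : V → ℝ} {v : V} {t : ℝ}
    (hv : a v < G.lipschitzEnvelope ((2 * s + 1) * κ) a v)
    (hmax : ∀ u, G.lipschitzEnvelope ((2 * s + 1) * κ) a u -
      G.lipschitzEnvelope ((2 * s + 1) * κ) a v ≤ L u t - L v t) :
    fastCond G L κ v t := by
  have hc : 0 ≤ (2 * (s : ℝ) + 1) * κ := by positivity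
  obtain ⟨b, hvb, hb⟩ := hG.exists_adj_add_le_lipschitzEnvelope hc hv
  refine ⟨s, ⟨b, hvb, by linarith [hmax b]⟩, fun y hvy => ?_⟩
  linarith [hmax y, lipschitzEnvelope_sub_le_of_adj (a := a) hc hvy]

theorem lipschitzEnvelope_sub_le_Psi (hκ : 0 ≤ κ) (v : V) (t : ℝ) :
    G.lipschitzEnvelope ((2 * s + 1) * κ) (fun w => L w t) v - L v t ≤ Psi G L κ s v t := by
  obtain ⟨w, hw⟩ :=
    exists_lipschitzEnvelope_eq (G := G) (c := (2 * s + 1) * κ) (a := fun w => L w t) v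
  have hw' := le_sup' (fun w => L w t - L v t - 2 * (s : ℝ) * κ * G.dist v w) (mem_univ w)
  have : 0 ≤ κ * G.dist v w := by positivity
  rw [hw]
  unfold Psi
  linarith

theorem Psi_sub_le_lipschitzEnvelope (hκ : 0 ≤ κ) {D : ℕ} {v : V} (hD : ∀ w, G.dist v w ≤ D)
    (t : ℝ) :
    Psi G L κ s v t - κ * D ≤
      G.lipschitzEnvelope ((2 * s + 1) * κ) (fun w => L w t) v - L v t := by
  obtain ⟨w, -, hw⟩ :=
    exists_mem_eq_sup' univ_nonempty fun w => L w t - L v t - 2 * (s : ℝ) * κ * G.dist v w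
  have hw' := sub_mul_dist_le_lipschitzEnvelope (G := G) (c := (2 * s + 1) * κ)
    (a := fun w => L w t) v w
  have : κ * G.dist v w ≤ κ * D := mul_le_mul_of_nonneg_left (by exact_mod_cast hD w) hκ
  unfold Psi
  rw [hw]
  linarith

end ClockSync

theorem stmt_8_general [Fintype V] [Nonempty V] (G : SimpleGraph V) (hconn : G.Connected)
    (L : V → ℝ → ℝ) (κ ρ μ : ℝ) (hκ : 0 < κ) (hρ : 0 < ρ) (hρμ : ρ < μ)
    (hdiff : ∀ v, Differentiable ℝ (L v))
    (hrate : ∀ v u, 0 ≤ u → 1 ≤ deriv (L v) u ∧ deriv (L v) u ≤ (1 + μ) * (1 + ρ))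
    (hfastI : ∀ v u, 0 ≤ u → fastCond G L κ v u → 1 + μ ≤ deriv (L v) u)
    (D : ℕ) (hD : D = univ.sup fun p : V × V => G.dist p.1 p.2)
    (s : ℕ) (t0 t1 : ℝ) (ht0 : 0 ≤ t0) (ht01 : t0 ≤ t1)
    (hcatch : t0 + PsiMax G L κ s t0 / μ ≤ t1) :
    ∀ w : V, (t1 - t0) + Psi G L κ s w t0 - κ * D ≤ L w t1 - L w t0 := by
  set N := G.lipschitzEnvelope ((2 * s + 1) * κ) fun w => L w t0
  set f : V → ℝ → ℝ := fun v t => (t - t0) + N v - L v t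
  have hf_anti : ∀ v, AntitoneOn (f v) (Set.Ici t0) := fun v x hx z _ hxz => by
    have := sub_le_sub_of_one_le_deriv (hdiff v) (fun u hu => (hrate v u hu).1) (ht0.trans hx) hxz
    linarith
  have hf_deriv : ∀ v x, HasDerivAt (f v) (1 - deriv (L v) x) x := fun v x =>
    (((hasDerivAt_id x).sub_const t0).add_const (N v)).sub ((hdiff v) x).hasDerivAt
  have hstart : univ.sup' univ_nonempty (fun v => f v t0) ≤ μ * (t1 - t0) := by
    refine sup'_le _ _ fun v _ => ?_
    have hN : N v - L v t0 ≤ Psi G L κ s v t0 := lipschitzEnvelope_sub_le_Psi hκ.le v t0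
    have hP : Psi G L κ s v t0 ≤ PsiMax G L κ s t0 := le_sup' (Psi G L κ s · t0) (mem_univ v)
    have hcatch' := (div_le_iff₀' (hρ.trans hρμ)).1 (le_sub_iff_add_le'.2 hcatch)
    change t0 - t0 + N v - L v t0 ≤ _
    linarith
  have hend := sup'_nonpos_of_hasDerivAt ht01 hf_deriv hf_anti (fun x hx hpos v hv => by
    have hfast := fastCond_of_forall_sub_le (L := L) (a := fun w => L w t0) (s := s) (t := x)
      hconn hκ.le (by linarith [hf_anti v Set.self_mem_Ici hx.1 hx.1]) fun u => by
        linarith [le_sup' (f · x) (mem_univ u)]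
    linarith [hfastI v x (ht0.trans hx.1) hfast]) hstart
  intro w
  have hDw : ∀ u, G.dist w u ≤ D := fun u =>
    hD ▸ le_sup (f := fun p : V × V => G.dist p.1 p.2) (mem_univ (w, u))
  have hN : Psi G L κ s w t0 - κ * D ≤ N w - L w t0 := Psi_sub_le_lipschitzEnvelope hκ.le hDw t0
  have hw : f w t1 ≤ 0 := (le_sup' (f · t1) (mem_univ w)).trans hend
  change t1 - t0 + N w - L w t1 ≤ 0 at hw
  linarith

/-- Catch-up, same level: every node catches up to `Ψ_w^s(t0) - κD`. -/
theorem stmt_8 [Fintype V] [Nonempty V] (G : SimpleGraph V) (hconn : G.Connected)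
    (L : V → ℝ → ℝ) (κ ρ μ : ℝ) (hκ : 0 < κ) (hρ : 0 < ρ) (hρμ : ρ < μ)
    (hdiff : ∀ v, Differentiable ℝ (L v))
    (hrate : ∀ v u, 0 ≤ u → 1 ≤ deriv (L v) u ∧ deriv (L v) u ≤ (1 + μ) * (1 + ρ))
    (hfastI : ∀ v u, 0 ≤ u → fastCond G L κ v u → 1 + μ ≤ deriv (L v) u)
    (hslowI : ∀ v u, 0 ≤ u → slowCond G L κ v u → deriv (L v) u ≤ 1 + ρ)
    (D : ℕ) (hD : D = univ.sup fun p : V × V => G.dist p.1 p.2)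
    (s : ℕ) (t0 t1 : ℝ) (ht0 : 0 ≤ t0) (ht01 : t0 ≤ t1)
    (hcatch : t0 + PsiMax G L κ s t0 / μ ≤ t1) :
    ∀ w : V, (t1 - t0) + Psi G L κ s w t0 - κ * D ≤ L w t1 - L w t0 :=
  stmt_8_general G hconn L κ ρ μ hκ hρ hρμ hdiff hrate hfastI D hD s t0 t1 ht0 ht01 hcatch
end

section
/- Fix s ∈ ℕ. Suppose ψ ∈ ℝ satisfies Ψ^s(t) ≤ ψ for all times t ≥ 0, and suppose the local skew at time 0 satisfies 𝓛(0) ≤ 2(s+1)κ. Then for all natural numbers s′ ≥ s and all times t ≥ 0, Ψ^{s′}(t) ≤ (ρ/μ)^{s′−s}·ψ. -/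
/-!
Induction on `s'`. For the step from `σ` to `σ + 1`, let `c` bound `Ψ^σ` and `β = ρ/μ`, and run a
barrier argument at level `β c` on `max_v (Ψ_v^{σ+1} + β Ξ_v^σ)`. At time `0` it is below the
level, since the initial local skew gives `Ψ^{σ+1}(0) ≤ 0`, and `Ξ_v^σ ≤ Ψ^σ - κ d(v, u)` for the
maximising `u`. At a triple `(v, w, u)` attaining the maximum at or above the level (`w` maximising
in `Ψ_v^{σ+1}`, `u` in `Ξ_v^σ`): if `w = v`, then also `u = v` by the same bound on `Ξ_v^σ`;
otherwise `w` is slow, and `u` is fast (`v` itself when `u = v`), so the derivative is at most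
`(1 + ρ) - (1 - β) - β (1 + μ) = 0`.
-/

open Finset

variable {V : Type*}

open Filter Topology in
theorem eventually_slope_sup'_lt_s14 {ι : Type*} [Fintype ι] [Nonempty ι] {g : ι → ℝ → ℝ} {x r : ℝ}
    (hg : ∀ i, DifferentiableAt ℝ (g i) x)
    (hr : ∀ i, g i x = univ.sup' univ_nonempty (g · x) → deriv (g i) x < r) :
    ∀ᶠ z in 𝓝[>] x, slope (fun y ↦ univ.sup' univ_nonempty (g · y)) x z < r := by
  set f := fun y ↦ univ.sup' univ_nonempty (g · y)
  have hbelow : ∀ᶠ z in 𝓝[>] x, ∀ i, g i z - f x < r * (z - x) := by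
    refine eventually_all.2 fun i ↦ ?_
    rcases (le_sup' (g · x) (mem_univ i)).eq_or_lt with hi | hi
    · have hslope : ∀ᶠ z in 𝓝[>] x, slope (g i) x z < r :=
        ((hasDerivAt_iff_tendsto_slope.1 (hg i).hasDerivAt).mono_left
          (nhdsWithin_mono x fun _ hz ↦ ne_of_gt hz)).eventually_lt_const (hr i hi)
      filter_upwards [hslope, self_mem_nhdsWithin] with z hz (hxz : x < z)
      rw [slope_def_field, div_lt_iff₀ (sub_pos.2 hxz)] at hz
      linarith
    · have hcont : ContinuousAt (fun z ↦ g i z - f x - r * (z - x)) x := by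
        have := (hg i).continuousAt
        fun_prop
      have hneg : ∀ᶠ z in 𝓝 x, g i z - f x - r * (z - x) < 0 :=
        hcont.eventually_lt continuousAt_const (by simpa using hi)
      filter_upwards [nhdsWithin_le_nhds hneg] with z hz
      linarith
  filter_upwards [hbelow, self_mem_nhdsWithin] with z hz (hxz : x < z)
  rw [slope_def_field, div_lt_iff₀ (sub_pos.2 hxz), sub_lt_iff_lt_add']
  exact (sup'_lt_iff _).2 fun i _ ↦ by linarith [hz i]

theorem le_of_deriv_nonpos_at_argmax {ι : Type*} [Fintype ι] [Nonempty ι] {g : ι → ℝ → ℝ}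
    (hg : ∀ i, Differentiable ℝ (g i)) {c a b : ℝ} (hab : a ≤ b) (ha : ∀ i, g i a ≤ c)
    (hder : ∀ x ∈ Set.Ico a b, ∀ i, (∀ j, g j x ≤ g i x) → c ≤ g i x → deriv (g i) x ≤ 0)
    (i : ι) : g i b ≤ c := by
  set f := fun y ↦ univ.sup' univ_nonempty (g · y)
  have hactive : ∀ x, ({i | g i x = f x} : Finset ι).Nonempty := fun x ↦ by
    obtain ⟨i, -, hi⟩ := exists_mem_eq_sup' univ_nonempty (g · x)
    exact ⟨i, by simp [f, hi]⟩
  -- `f' x` bounds the right Dini derivative of `f` at `x`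
  set f' := fun x ↦ ({i | g i x = f x} : Finset ι).sup' (hactive x) fun i ↦ deriv (g i) x
  have hfε : ∀ ε > 0, f b ≤ c + ε * (b - a) := fun ε hε ↦ by
    refine image_le_of_liminf_slope_right_lt_deriv_boundary (f' := f')
      (B := fun x ↦ c + ε * (x - a)) (B' := fun _ ↦ ε)
      (Continuous.finset_sup'_apply _ fun i _ ↦ (hg i).continuous).continuousOn
      (fun x _ r hr ↦ (eventually_slope_sup'_lt_s14 (fun i ↦ hg i x) fun i hi ↦
        (le_sup' (fun i ↦ deriv (g i) x) (by simpa using hi)).trans_lt hr).frequently)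
      (by simpa [f] using ha)
      (fun x ↦ by simpa using ((hasDerivAt_id x).sub_const a).const_mul ε |>.const_add c)
      (fun x hx hfx ↦ (sup'_le _ _ fun i hi ↦ ?_).trans_lt hε) (Set.right_mem_Icc.2 hab)
    have hi : g i x = f x := by simpa using hi
    refine hder x hx i (fun j ↦ hi ▸ le_sup' (g · x) (mem_univ j)) ?_
    nlinarith [hx.1]
  refine (le_sup' (g · b) (mem_univ i)).trans (le_of_forall_pos_le_add fun ε hε ↦ ?_)
  have hshrink : ε / (b - a + 1) * (b - a) ≤ ε := by
    rw [div_mul_eq_mul_div, div_le_iff₀ (by linarith)]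
    nlinarith
  linarith [hfε (ε / (b - a + 1)) (by positivity)]

namespace SimpleGraph

variable {G : SimpleGraph V}

theorem Connected.exists_adj_dist_lt (hconn : G.Connected) {v w : V} (hne : v ≠ w) :
    ∃ x, G.Adj v x ∧ G.dist x w < G.dist v w := by
  obtain ⟨p, hp⟩ := hconn.exists_walk_length_eq_dist v w
  cases p with
  | nil => exact absurd rfl hne
  | cons hadj q =>
    have := dist_le q
    exact ⟨_, hadj, by rw [Walk.length_cons] at hp; omega⟩

theorem Adj.dist_le_dist_add_one {w y : V} (h : G.Adj w y) (v : V) :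
    G.dist v y ≤ G.dist v w + 1 := by
  simpa [dist_eq_one_iff_adj.2 h] using h.reachable.dist_triangle_right v

theorem Walk.sub_le_mul_length {f : V → ℝ} {a : ℝ} (hf : ∀ v w, G.Adj v w → f w - f v ≤ a)
    {v w : V} (p : G.Walk v w) : f w - f v ≤ a * p.length := by
  induction p with
  | nil => simp
  | cons h q ih =>
    rw [Walk.length_cons]
    push_cast
    linarith [hf _ _ h]

theorem Connected.sub_le_mul_dist (hconn : G.Connected) {f : V → ℝ} {a : ℝ}
    (hf : ∀ v w, G.Adj v w → f w - f v ≤ a) (v w : V) : f w - f v ≤ a * G.dist v w := by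
  obtain ⟨p, hp⟩ := hconn.exists_walk_length_eq_dist v w
  exact hp ▸ p.sub_le_mul_length hf

theorem sub_le_of_adj_of_isMaxOn {f : V → ℝ} {a : ℝ} (ha : 0 ≤ a) {v w y : V}
    (hmax : IsMaxOn (fun y ↦ f y - a * G.dist v y) Set.univ w) (hy : G.Adj w y) :
    f y - f w ≤ a := by
  have hfy := isMaxOn_univ_iff.1 hmax y
  have hdist : (G.dist v y : ℝ) ≤ G.dist v w + 1 := by
    exact_mod_cast hy.dist_le_dist_add_one v
  nlinarith

theorem Connected.exists_adj_le_sub_of_isMaxOn (hconn : G.Connected) {f : V → ℝ} {a : ℝ}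
    (ha : 0 ≤ a) {v w : V} (hmax : IsMaxOn (fun y ↦ f y - a * G.dist v y) Set.univ w)
    (hne : w ≠ v) : ∃ x, G.Adj w x ∧ a ≤ f w - f x := by
  obtain ⟨x, hadj, hlt⟩ := hconn.exists_adj_dist_lt hne
  refine ⟨x, hadj, ?_⟩
  have hfx := isMaxOn_univ_iff.1 hmax x
  have hdist : (G.dist v x : ℝ) + 1 ≤ G.dist v w := by
    rw [dist_comm, dist_comm (u := v)]
    exact_mod_cast hlt
  nlinarith

end SimpleGraph

section GCS

variable {G : SimpleGraph V} {L : V → ℝ → ℝ} {κ : ℝ}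

theorem slowCond_of_isMaxOn (hconn : G.Connected) (hκ : 0 ≤ κ) {s : ℕ} {v w : V} {t : ℝ}
    (hmax : IsMaxOn (fun y ↦ L y t - 2 * s * κ * G.dist v y) Set.univ w) (hne : w ≠ v) :
    slowCond G L κ w t :=
  have ha : 0 ≤ 2 * (s : ℝ) * κ := by positivity
  ⟨s, hconn.exists_adj_le_sub_of_isMaxOn ha hmax hne,
    fun _ hy ↦ SimpleGraph.sub_le_of_adj_of_isMaxOn ha hmax hy⟩

theorem fastCond_of_isMaxOn (hconn : G.Connected) (hκ : 0 ≤ κ) {s : ℕ} {v u : V} {t : ℝ}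
    (hmax : IsMaxOn (fun y ↦ -L y t - (2 * s + 1) * κ * G.dist v y) Set.univ u) (hne : u ≠ v) :
    fastCond G L κ u t := by
  have hb : 0 ≤ (2 * (s : ℝ) + 1) * κ := by positivity
  obtain ⟨x, hadj, hx⟩ := hconn.exists_adj_le_sub_of_isMaxOn hb hmax hne
  refine ⟨s, ⟨x, hadj, by linarith⟩, fun y hy ↦ ?_⟩
  linarith [SimpleGraph.sub_le_of_adj_of_isMaxOn hb hmax hy]

theorem fastCond_of_isMaxOn_center (hconn : G.Connected) (hκ : 0 ≤ κ) {σ : ℕ} {v w : V}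
    {t : ℝ} (hw : IsMaxOn (fun y ↦ -L y t - 2 * ((σ + 1 : ℕ) : ℝ) * κ * G.dist w y) Set.univ v)
    (hv : IsMaxOn (fun y ↦ -L y t - (2 * σ + 1) * κ * G.dist v y) Set.univ v) (hne : w ≠ v) :
    fastCond G L κ v t := by
  obtain ⟨x, hadj, hx⟩ := hconn.exists_adj_le_sub_of_isMaxOn (by positivity) hw hne.symm
  refine ⟨σ, ⟨x, hadj, ?_⟩, fun y hy ↦ ?_⟩
  · push_cast at hx
    linarith
  · linarith [SimpleGraph.sub_le_of_adj_of_isMaxOn (by positivity) hv hy]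

/-- Maximising over the triples `(v, w, u)` gives `max_v (Ψ_v^{σ+1}(x) + β Ξ_v^σ(x))`. -/
noncomputable def stepPotential (G : SimpleGraph V) (L : V → ℝ → ℝ) (κ β : ℝ) (σ : ℕ)
    (p : V × V × V) (x : ℝ) : ℝ :=
  (L p.2.1 x - L p.1 x - 2 * ((σ + 1 : ℕ) : ℝ) * κ * G.dist p.1 p.2.1) +
    β * (L p.1 x - L p.2.2 x - (2 * (σ : ℝ) + 1) * κ * G.dist p.1 p.2.2)

theorem hasDerivAt_stepPotential (hL : ∀ v, Differentiable ℝ (L v)) (β : ℝ) (σ : ℕ)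
    (p : V × V × V) (x : ℝ) :
    HasDerivAt (stepPotential G L κ β σ p) (deriv (L p.2.1) x - deriv (L p.1) x +
      β * (deriv (L p.1) x - deriv (L p.2.2) x)) x :=
  (((hL _ x).hasDerivAt.sub (hL _ x).hasDerivAt).sub_const _).add
    ((((hL _ x).hasDerivAt.sub (hL _ x).hasDerivAt).sub_const _).const_mul β)

end GCS

section PsiMax

variable [Fintype V] [Nonempty V] {G : SimpleGraph V} {L : V → ℝ → ℝ} {κ : ℝ}

theorem psiMax_le_iff {s : ℕ} {t c : ℝ} :
    PsiMax G L κ s t ≤ c ↔ ∀ v w, L w t - L v t - 2 * s * κ * G.dist v w ≤ c := by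
  simp [PsiMax, Psi]

theorem psiMax_antitone (hκ : 0 ≤ κ) {s s' : ℕ} (hss' : s ≤ s') (t : ℝ) :
    PsiMax G L κ s' t ≤ PsiMax G L κ s t :=
  psiMax_le_iff.2 fun v w ↦ by
    have hcoef : 2 * (s : ℝ) * κ * G.dist v w ≤ 2 * (s' : ℝ) * κ * G.dist v w := by gcongr
    linarith [psiMax_le_iff.1 (le_refl (PsiMax G L κ s t)) v w]

theorem deriv_stepPotential_nonpos (hconn : G.Connected) (hκ : 0 < κ) {ρ μ : ℝ} (hρ : 0 < ρ)
    (hρμ : ρ < μ) (hL : ∀ v, Differentiable ℝ (L v)) {x : ℝ} (hrate : ∀ v, 1 ≤ deriv (L v) x)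
    (hfast : ∀ v, fastCond G L κ v x → 1 + μ ≤ deriv (L v) x)
    (hslow : ∀ v, slowCond G L κ v x → deriv (L v) x ≤ 1 + ρ)
    {σ : ℕ} {c : ℝ} (hΨ : PsiMax G L κ σ x ≤ c) {p : V × V × V}
    (hmax : ∀ q, stepPotential G L κ (ρ / μ) σ q x ≤ stepPotential G L κ (ρ / μ) σ p x)
    (hlvl : ρ / μ * c ≤ stepPotential G L κ (ρ / μ) σ p x) :
    deriv (stepPotential G L κ (ρ / μ) σ p) x ≤ 0 := by
  obtain ⟨v, w, u⟩ := p
  rw [(hasDerivAt_stepPotential hL _ σ _ x).deriv]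
  set β := ρ / μ
  have hμ : 0 < μ := hρ.trans hρμ
  have hβ : 0 < β := div_pos hρ hμ
  have hβ1 : β < 1 := (div_lt_one hμ).2 hρμ
  have hβμ : β * μ = ρ := div_mul_cancel₀ ρ hμ.ne'
  simp only [stepPotential] at hmax hlvl ⊢
  have hw : IsMaxOn (fun y ↦ L y x - 2 * ((σ + 1 : ℕ) : ℝ) * κ * G.dist v y) Set.univ w :=
    isMaxOn_univ_iff.2 fun y ↦ by linarith [hmax (v, y, u)]
  have hu : IsMaxOn (fun y ↦ -L y x - (2 * σ + 1) * κ * G.dist v y) Set.univ u :=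
    isMaxOn_univ_iff.2 fun y ↦ le_of_mul_le_mul_left (by linarith [hmax (v, w, y)]) hβ
  rcases eq_or_ne w v with rfl | hwv
  · obtain rfl : u = w := by
      by_contra huw
      have hΨuw := psiMax_le_iff.1 hΨ u w
      have hd : 1 ≤ (G.dist w u : ℝ) := by exact_mod_cast hconn.pos_dist_of_ne (Ne.symm huw)
      rw [SimpleGraph.dist_comm] at hΨuw
      simp only [SimpleGraph.dist_self, CharP.cast_eq_zero, mul_zero, sub_self, zero_add] at hlvl
      linarith [le_of_mul_le_mul_left hlvl hβ, mul_le_mul_of_nonneg_left hd hκ.le]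
    linarith
  · have hws := hslow w (slowCond_of_isMaxOn hconn hκ.le hw hwv)
    rcases eq_or_ne u v with rfl | huv
    · have hcenter : IsMaxOn (fun y ↦ -L y x - 2 * ((σ + 1 : ℕ) : ℝ) * κ * G.dist w y)
          Set.univ u :=
        isMaxOn_univ_iff.2 fun y ↦ by
          have := hmax (y, w, y)
          simp only [SimpleGraph.dist_self, SimpleGraph.dist_comm (u := w)] at this ⊢
          push_cast at this ⊢
          linarith
      linarith [hfast u (fastCond_of_isMaxOn_center hconn hκ.le hcenter hu hwv)]
    · have hus := hfast u (fastCond_of_isMaxOn hconn hκ.le hu huv)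
      nlinarith [hrate v]

theorem psiMax_succ_le (hconn : G.Connected) (hκ : 0 < κ) {ρ μ : ℝ} (hρ : 0 < ρ) (hρμ : ρ < μ)
    (hL : ∀ v, Differentiable ℝ (L v)) (hrate : ∀ v x, 0 ≤ x → 1 ≤ deriv (L v) x)
    (hfast : ∀ v x, 0 ≤ x → fastCond G L κ v x → 1 + μ ≤ deriv (L v) x)
    (hslow : ∀ v x, 0 ≤ x → slowCond G L κ v x → deriv (L v) x ≤ 1 + ρ)
    {σ : ℕ} {c : ℝ} (hΨ : ∀ x, 0 ≤ x → PsiMax G L κ σ x ≤ c)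
    (h0 : PsiMax G L κ (σ + 1) 0 ≤ 0) {t : ℝ} (ht : 0 ≤ t) :
    PsiMax G L κ (σ + 1) t ≤ ρ / μ * c := by
  have hβ : 0 ≤ ρ / μ := div_nonneg hρ.le (hρ.trans hρμ).le
  have hstart : ∀ p, stepPotential G L κ (ρ / μ) σ p 0 ≤ ρ / μ * c := fun ⟨v, w, u⟩ ↦ by
    have hΨ0 := psiMax_le_iff.1 (hΨ 0 le_rfl) u v
    rw [SimpleGraph.dist_comm] at hΨ0
    have hcoef : 2 * (σ : ℝ) * κ * G.dist v u ≤ (2 * σ + 1) * κ * G.dist v u := by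
      gcongr
      linarith
    have hΞ0 := mul_le_mul_of_nonneg_left (show L v 0 - L u 0 - (2 * σ + 1) * κ * G.dist v u ≤ c
      by linarith) hβ
    unfold stepPotential
    linarith [psiMax_le_iff.1 h0 v w, hΞ0]
  refine psiMax_le_iff.2 fun v w ↦ ?_
  have hbarrier := le_of_deriv_nonpos_at_argmax
    (fun p x ↦ (hasDerivAt_stepPotential hL _ σ p x).differentiableAt) ht hstart
    (fun x hx _ hmax hlvl ↦ deriv_stepPotential_nonpos hconn hκ hρ hρμ hL
      (fun v ↦ hrate v x hx.1) (fun v ↦ hfast v x hx.1) (fun v ↦ hslow v x hx.1) (hΨ x hx.1)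
      hmax hlvl) (v, w, v)
  simpa [stepPotential] using hbarrier

end PsiMax

/-- geometric decay of `Ψ^{s'}` for `s' ≥ s`, under good initialization. -/
theorem stmt_14 [Fintype V] [Nonempty V] (G : SimpleGraph V) (hconn : G.Connected)
    (L : V → ℝ → ℝ) (κ ρ μ : ℝ) (hκ : 0 < κ) (hρ : 0 < ρ) (hρμ : ρ < μ)
    (hdiff : ∀ v, Differentiable ℝ (L v))
    (hrate : ∀ v u, 0 ≤ u → 1 ≤ deriv (L v) u ∧ deriv (L v) u ≤ (1 + μ) * (1 + ρ))
    (hfastI : ∀ v u, 0 ≤ u → fastCond G L κ v u → 1 + μ ≤ deriv (L v) u)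
    (hslowI : ∀ v u, 0 ≤ u → slowCond G L κ v u → deriv (L v) u ≤ 1 + ρ)
    (s : ℕ) (ψ : ℝ) (hψ : ∀ t, 0 ≤ t → PsiMax G L κ s t ≤ ψ)
    (hinit : ∀ v w, G.Adj v w → |L v 0 - L w 0| ≤ 2 * ((s : ℝ) + 1) * κ) :
    ∀ s' : ℕ, s ≤ s' → ∀ t, 0 ≤ t → PsiMax G L κ s' t ≤ (ρ / μ) ^ (s' - s) * ψ := by
  have hstart : PsiMax G L κ (s + 1) 0 ≤ 0 := psiMax_le_iff.2 fun v w ↦ by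
    have := hconn.sub_le_mul_dist (f := (L · 0)) (fun v w h ↦
      (le_abs_self _).trans (abs_sub_comm (L v 0) (L w 0) ▸ hinit v w h)) v w
    push_cast
    linarith
  intro s' hs'
  induction s', hs' using Nat.le_induction with
  | base => simpa using hψ
  | succ σ hσ ih =>
    intro t ht
    calc PsiMax G L κ (σ + 1) t ≤ ρ / μ * ((ρ / μ) ^ (σ - s) * ψ) :=
          psiMax_succ_le hconn hκ hρ hρμ hdiff (fun v x hx ↦ (hrate v x hx).1) hfastI hslowI ih
            ((psiMax_antitone hκ.le (by omega) 0).trans hstart) ht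
      _ = (ρ / μ) ^ (σ + 1 - s) * ψ := by rw [Nat.sub_add_comm hσ, pow_succ]; ring
end
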